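/- arXiv:2502.00753 — 4 statements merged into one kernel-verified Lean document; each statement's English description precedes it below -/
import Mathlib

section
/- Let f be in the class F_{ℓ,r}(‖·‖) (i.e., f is (ℓ,r)*-smooth). Then f belongs to the class F_ℓ(‖·‖) (i.e., f is ℓ*-smooth): for almost every x ∈ X, f is twice differentiable at x and ‖∇²f(x)h‖_* ≤ ℓ(‖∇f(x)‖_*)·‖h‖ for all h ∈ X. -/
/-!
On the ball of radius `r ‖f' x‖` around `x ∈ X` the gradient `f'` is `ell ‖f' x‖`-Lipschitz, so
`f'` is Lipschitz near every point of `X` and Rademacher's theorem makes it differentiable almost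
everywhere on `X`. At such a point `x`, the Lipschitz bound on the ball centred at `x` itself
bounds the operator norm of the second derivative by `ell ‖f' x‖`.
-/

open MeasureTheory Filter Topology

section Rademacher

variable {E F : Type*} [NormedAddCommGroup E] [NormedSpace ℝ E] [FiniteDimensional ℝ E]
  [MeasurableSpace E] [BorelSpace E] {μ : Measure E} [μ.IsAddHaarMeasure]
  [NormedAddCommGroup F] [NormedSpace ℝ F] [FiniteDimensional ℝ F]

theorem LipschitzOnWith.ae_differentiableAt_of_mem_interior {g : E → F} {K : NNReal}
    {t : Set E} (hg : LipschitzOnWith K g t) :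
    ∀ᵐ x ∂μ, x ∈ interior t → DifferentiableAt ℝ g x := by
  filter_upwards [(hg.mono interior_subset).ae_differentiableWithinAt_of_mem (μ := μ)]
    with x hx hxt
  exact (hx hxt).differentiableAt (isOpen_interior.mem_nhds hxt)

theorem ae_differentiableAt_of_forall_lipschitzOnWith_nhds {g : E → F} {s : Set E}
    (hg : ∀ x ∈ s, ∃ K, ∃ t ∈ 𝓝 x, LipschitzOnWith K g t) :
    ∀ᵐ x ∂μ, x ∈ s → DifferentiableAt ℝ g x := by
  -- The set of bad points is null near each of its points, hence null (Lindelöf).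
  rw [ae_iff]
  refine measure_null_of_locally_null _ fun x hx => ?_
  obtain ⟨K, t, ht, hlip⟩ := hg x (Classical.not_imp.1 hx).1
  refine ⟨_, inter_mem_nhdsWithin _ (interior_mem_nhds.2 ht), ?_⟩
  rw [measure_eq_zero_iff_ae_notMem]
  filter_upwards [hlip.ae_differentiableAt_of_mem_interior (μ := μ)] with y hy ⟨hyN, hyt⟩
  exact hyN fun _ => hy hyt

end Rademacher

theorem ell_r_star_smooth_subset_ell_star_smooth_general
    {E : Type*} [NormedAddCommGroup E] [NormedSpace ℝ E] [FiniteDimensional ℝ E]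
    [MeasurableSpace E] [BorelSpace E] (μ : Measure E) [μ.IsAddHaarMeasure]
    (X : Set E)
    (f' : E → E →L[ℝ] ℝ)
    (ell : ℝ → ℝ) (hellpos : ∀ a, 0 ≤ a → 0 < ell a)
    (r : ℝ → ℝ) (hrpos : ∀ a, 0 ≤ a → 0 < r a)
    (hlip : ∀ x ∈ X, ∀ x₁ ∈ Metric.closedBall x (r ‖f' x‖),
      ∀ x₂ ∈ Metric.closedBall x (r ‖f' x‖),
        ‖f' x₁ - f' x₂‖ ≤ ell ‖f' x‖ * ‖x₁ - x₂‖) :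
    ∀ᵐ x ∂μ, x ∈ X → ∃ f'' : E →L[ℝ] E →L[ℝ] ℝ, HasFDerivAt f' f'' x ∧
      ∀ h ∈ X, ‖f'' h‖ ≤ ell ‖f' x‖ * ‖h‖ := by
  have hball : ∀ x ∈ X, Metric.closedBall x (r ‖f' x‖) ∈ 𝓝 x := fun x _ =>
    Metric.closedBall_mem_nhds x (hrpos _ (norm_nonneg _))
  have hlocLip : ∀ x ∈ X, ∃ K, ∃ t ∈ 𝓝 x, LipschitzOnWith K f' t := fun x hx =>
    ⟨_, _, hball x hx, LipschitzOnWith.of_dist_le' fun y hy z hz => by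
      simpa only [dist_eq_norm] using hlip x hx y hy z hz⟩
  filter_upwards [ae_differentiableAt_of_forall_lipschitzOnWith_nhds (μ := μ) hlocLip]
    with x hdiff hx
  have hf'' := (hdiff hx).hasFDerivAt
  have hnorm : ‖fderiv ℝ f' x‖ ≤ ell ‖f' x‖ :=
    hf''.le_of_lip' (hellpos _ (norm_nonneg _)).le <| eventually_of_mem (hball x hx)
      fun y hy => hlip x hx y hy x (Metric.mem_closedBall_self (hrpos _ (norm_nonneg _)).le)
  exact ⟨fderiv ℝ f' x, hf'', fun h _ => (fderiv ℝ f' x).le_of_opNorm_le hnorm h⟩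

/-- If `f` is `(ℓ,r)*`-smooth (i.e. `f ∈ F_{ℓ,r}(‖·‖)`), then `f` is
`ℓ*`-smooth (i.e. `f ∈ F_ℓ(‖·‖)`): for almost every `x ∈ X`, `f` is twice differentiable
at `x` and `‖∇²f(x)h‖_* ≤ ℓ(‖∇f(x)‖_*)·‖h‖` for all `h ∈ X`. -/
theorem ell_r_star_smooth_subset_ell_star_smooth
    {E : Type*} [NormedAddCommGroup E] [NormedSpace ℝ E] [FiniteDimensional ℝ E]
    [MeasurableSpace E] [BorelSpace E] (μ : Measure E) [μ.IsAddHaarMeasure]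
    (X : Set E) (hXne : X.Nonempty) (hXopen : IsOpen X) (hXconv : Convex ℝ X)
    (f : E → ℝ) (f' : E → E →L[ℝ] ℝ) (hdiff : ∀ x ∈ X, HasFDerivAt f (f' x) x)
    (ell : ℝ → ℝ) (hellmono : MonotoneOn ell (Set.Ici 0))
    (hellcont : ContinuousOn ell (Set.Ici 0)) (hellpos : ∀ a, 0 ≤ a → 0 < ell a)
    (r : ℝ → ℝ) (hrmono : AntitoneOn r (Set.Ici 0))
    (hrcont : ContinuousOn r (Set.Ici 0)) (hrpos : ∀ a, 0 ≤ a → 0 < r a)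
    (hball : ∀ x ∈ X, Metric.closedBall x (r ‖f' x‖) ⊆ X)
    (hlip : ∀ x ∈ X, ∀ x₁ ∈ Metric.closedBall x (r ‖f' x‖),
      ∀ x₂ ∈ Metric.closedBall x (r ‖f' x‖),
        ‖f' x₁ - f' x₂‖ ≤ ell ‖f' x‖ * ‖x₁ - x₂‖) :
    ∀ᵐ x ∂μ, x ∈ X → ∃ f'' : E →L[ℝ] E →L[ℝ] ℝ, HasFDerivAt f' f'' x ∧
      ∀ h ∈ X, ‖f'' h‖ ≤ ell ‖f' x‖ * ‖h‖ :=
  ell_r_star_smooth_subset_ell_star_smooth_general μ X f' ell hellpos r hrpos hlip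
end

section
/- Let ψ be a 1-strongly convex, continuously differentiable distance-generating function on X with Bregman divergence B. For any linear functional g on E and any x₀ ∈ X, if x⁺ ∈ X minimizes x ↦ ⟨g, x⟩ + B(x, x₀) over X, then ‖x⁺ − x₀‖ ≤ ‖g‖_*. -/
/-!
The first-order optimality condition of the prox step at `x⁺` against the competitor `x₀` reads
`⟨g + ∇ψ(x⁺) - ∇ψ(x₀), x₀ - x⁺⟩ ≥ 0`. Strong monotonicity of `∇ψ` turns this into
`‖x⁺ - x₀‖² ≤ g (x₀ - x⁺) ≤ ‖g‖_* ‖x⁺ - x₀‖`, and dividing by `‖x⁺ - x₀‖` gives the bound.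
-/

theorem IsMinOn.hasFDerivWithinAt_nonneg_of_convex {E : Type*} [NormedAddCommGroup E]
    [NormedSpace ℝ E] {f : E → ℝ} {f' : E →L[ℝ] ℝ} {s : Set E} {a y : E}
    (hs : Convex ℝ s) (hmin : IsMinOn f s a) (hf : HasFDerivWithinAt f f' s a)
    (ha : a ∈ s) (hy : y ∈ s) : 0 ≤ f' (y - a) :=
  hmin.localize.hasFDerivWithinAt_nonneg hf
    (sub_mem_posTangentConeAt_of_segment_subset (hs.segment_subset ha hy))

theorem HasFDerivAt.bregman_left {E : Type*} [NormedAddCommGroup E] [NormedSpace ℝ E]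
    {ψ : E → ℝ} {φ ℓ : E →L[ℝ] ℝ} {x y : E} (hψ : HasFDerivAt ψ φ x) :
    HasFDerivAt (fun z => ψ z - ψ y - ℓ (z - y)) (φ - ℓ) x := by
  have hℓ : HasFDerivAt (fun z => ℓ (z - y)) ℓ x :=
    ℓ.hasFDerivAt.comp x ((hasFDerivAt_id x).sub_const y)
  exact (hψ.sub_const (ψ y)).sub hℓ

theorem ContinuousLinearMap.norm_le_opNorm_of_sq_norm_le {E : Type*} [NormedAddCommGroup E]
    [NormedSpace ℝ E] {g : E →L[ℝ] ℝ} {v : E} (h : ‖v‖ ^ 2 ≤ g v) : ‖v‖ ≤ ‖g‖ := by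
  have hsq : ‖v‖ * ‖v‖ ≤ ‖g‖ * ‖v‖ :=
    calc ‖v‖ * ‖v‖ = ‖v‖ ^ 2 := (sq _).symm
      _ ≤ g v := h
      _ ≤ ‖g v‖ := le_abs_self _
      _ ≤ ‖g‖ * ‖v‖ := g.le_opNorm v
  rcases (norm_nonneg v).eq_or_lt with hv | hv
  · exact hv ▸ norm_nonneg g
  · exact le_of_mul_le_mul_right hsq hv

theorem prox_mapping_stability_general
    {E : Type*} [NormedAddCommGroup E] [NormedSpace ℝ E]
    (X : Set E) (hXconv : Convex ℝ X)
    (ψ : E → ℝ) (ψ' : E → E →L[ℝ] ℝ)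
    (hψdiff : ∀ x ∈ X, HasFDerivAt ψ (ψ' x) x)
    (hψsc : ∀ x ∈ X, ∀ y ∈ X, ‖x - y‖ ^ 2 ≤ (ψ' x - ψ' y) (x - y))
    (B : E → E → ℝ) (hB : ∀ x y, B x y = ψ x - ψ y - (ψ' y) (x - y))
    (g : E →L[ℝ] ℝ) (x₀ : E) (hx₀ : x₀ ∈ X)
    (xp : E) (hxp : xp ∈ X)
    (hmin : ∀ y ∈ X, g xp + B xp x₀ ≤ g y + B y x₀) :
    ‖xp - x₀‖ ≤ ‖g‖ := by
  have hmin_on : IsMinOn (fun x => g x + B x x₀) X xp := hmin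
  have hderiv : HasFDerivAt (fun x => g x + B x x₀) (g + (ψ' xp - ψ' x₀)) xp := by
    simp only [hB]
    exact g.hasFDerivAt.add (hψdiff xp hxp).bregman_left
  have hopt : 0 ≤ (g + (ψ' xp - ψ' x₀)) (x₀ - xp) :=
    IsMinOn.hasFDerivWithinAt_nonneg_of_convex hXconv hmin_on hderiv.hasFDerivWithinAt hxp hx₀
  have hmono := hψsc xp hxp x₀ hx₀
  have hdecomp :
      (g + (ψ' xp - ψ' x₀)) (x₀ - xp) = g (x₀ - xp) - (ψ' xp - ψ' x₀) (xp - x₀) := by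
    rw [add_apply, ← neg_sub xp x₀, map_neg, map_neg]
    ring
  have hsq : ‖x₀ - xp‖ ^ 2 ≤ g (x₀ - xp) := by
    rw [norm_sub_rev]
    linarith
  rw [norm_sub_rev]
  exact ContinuousLinearMap.norm_le_opNorm_of_sq_norm_le hsq

/-- For a 1-strongly convex, continuously differentiable distance-generating
function `ψ` on `X` with Bregman divergence `B`, if `x⁺ ∈ X` minimizes
`x ↦ ⟨g, x⟩ + B(x, x₀)` over `X`, then `‖x⁺ − x₀‖ ≤ ‖g‖_*`. -/
theorem prox_mapping_stability
    {E : Type*} [NormedAddCommGroup E] [NormedSpace ℝ E] [FiniteDimensional ℝ E]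
    (X : Set E) (hXne : X.Nonempty) (hXconv : Convex ℝ X)
    (ψ : E → ℝ) (ψ' : E → E →L[ℝ] ℝ)
    (hψdiff : ∀ x ∈ X, HasFDerivAt ψ (ψ' x) x) (hψcont : ContinuousOn ψ' X)
    (hψsc : ∀ x ∈ X, ∀ y ∈ X, ‖x - y‖ ^ 2 ≤ (ψ' x - ψ' y) (x - y))
    (B : E → E → ℝ) (hB : ∀ x y, B x y = ψ x - ψ y - (ψ' y) (x - y))
    (g : E →L[ℝ] ℝ) (x₀ : E) (hx₀ : x₀ ∈ X)
    (xp : E) (hxp : xp ∈ X)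
    (hmin : ∀ y ∈ X, g xp + B xp x₀ ≤ g y + B y x₀) :
    ‖xp - x₀‖ ≤ ‖g‖ :=
  prox_mapping_stability_general X hXconv ψ ψ' hψdiff hψsc B hB g x₀ hx₀ xp hxp hmin
end

section
/- Let w ∈ ℝⁿ, b ∈ ℝ, C ∈ ℝ with C ≠ 0, and f₁(x) := C·exp(wᵀx + b) for x ∈ ℝⁿ. Then for every x ∈ ℝⁿ: (i) the spectral norm of the Hessian satisfies ‖∇²f₁(x)‖₂ = ‖w‖₂·‖∇f₁(x)‖₂, so f₁ is ℓ̂-smooth in the ℓ₂ sense with link function ℓ̂(α) = ‖w‖₂·α; (ii) the ℓ₁→ℓ∞ operator norm of the Hessian satisfies sup_{h ≠ 0} ‖∇²f₁(x)h‖_∞/‖h‖₁ = ‖w‖_∞·‖∇f₁(x)‖_∞, so f₁ is ℓ̃*-smooth with respect to ‖·‖₁ with link function ℓ̃(α) = ‖w‖_∞·α. -/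
open RealInnerProductSpace

/-!
The gradient of `f(x) = C·exp(⟪w, x⟫ + b)` is `f(x)·w` and its Hessian is the rank-one map
`h ↦ f(x)·⟪w, h⟫·w`. For a rank-one map `h ↦ ⟪u, h⟫·v` the operator norm from a norm to its
dual is the product of the dual norms of `u` and `v`, and here `u = f(x)·w`, `v = w`.
For the `ℓ₁ → ℓ∞` norm this is the duality `sup_{h ≠ 0} |⟪w, h⟫| / ‖h‖₁ = ‖w‖_∞`,
attained at a standard basis vector.
-/

section ExpRidge

variable {E : Type*} [NormedAddCommGroup E] [InnerProductSpace ℝ E] (w : E) (b C : ℝ)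

theorem hasFDerivAt_const_mul_exp_inner_add (x : E) :
    HasFDerivAt (fun y => C * Real.exp (⟪w, y⟫ + b))
      ((C * Real.exp (⟪w, x⟫ + b)) • innerSL ℝ w) x := by
  have h := (((innerSL ℝ w).hasFDerivAt (x := x)).add_const b).exp.const_mul C
  rwa [smul_smul] at h

theorem hasGradientAt_const_mul_exp_inner_add [CompleteSpace E] (x : E) :
    HasGradientAt (fun y => C * Real.exp (⟪w, y⟫ + b))
      ((C * Real.exp (⟪w, x⟫ + b)) • w) x := by
  rw [hasGradientAt_iff_hasFDerivAt, map_smul]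
  exact hasFDerivAt_const_mul_exp_inner_add w b C x

end ExpRidge

section L1LinftyNorms

variable {ι : Type*}

noncomputable def linftyNorm (v : EuclideanSpace ℝ ι) : ℝ := ⨆ i, |v i|

theorem linftyNorm_smul (c : ℝ) (v : EuclideanSpace ℝ ι) :
    linftyNorm (c • v) = |c| * linftyNorm v := by
  simp only [linftyNorm, PiLp.smul_apply, smul_eq_mul, abs_mul]
  exact (Real.mul_iSup_of_nonneg (abs_nonneg c) _).symm

theorem linftyNorm_nonneg (v : EuclideanSpace ℝ ι) : 0 ≤ linftyNorm v :=
  Real.iSup_nonneg fun i => abs_nonneg (v i)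

variable [Fintype ι]

noncomputable def l1Norm (v : EuclideanSpace ℝ ι) : ℝ := ∑ i, |v i|

noncomputable def l1LinftyOpNorm (A : EuclideanSpace ℝ ι →L[ℝ] EuclideanSpace ℝ ι) : ℝ :=
  ⨆ h : {h : EuclideanSpace ℝ ι // h ≠ 0}, linftyNorm (A h.1) / l1Norm h.1

theorem abs_le_linftyNorm (v : EuclideanSpace ℝ ι) (i : ι) : |v i| ≤ linftyNorm v :=
  le_ciSup (f := fun i => |v i|) (Set.finite_range _).bddAbove i

theorem abs_inner_le_linftyNorm_mul_l1Norm (w h : EuclideanSpace ℝ ι) :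
    |⟪w, h⟫| ≤ linftyNorm w * l1Norm h := by
  rw [EuclideanSpace.inner_eq_star_dotProduct, l1Norm, Finset.mul_sum]
  refine (Finset.abs_sum_le_sum_abs _ _).trans (Finset.sum_le_sum fun i _ => ?_)
  rw [star_trivial, abs_mul, mul_comm]
  exact mul_le_mul_of_nonneg_right (abs_le_linftyNorm w i) (abs_nonneg _)

theorem l1Norm_single [DecidableEq ι] (i : ι) :
    l1Norm (EuclideanSpace.single i (1 : ℝ)) = 1 := by
  simp [l1Norm, PiLp.single_apply, apply_ite]

theorem l1Norm_nonneg (h : EuclideanSpace ℝ ι) : 0 ≤ l1Norm h :=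
  Finset.sum_nonneg fun _ _ => abs_nonneg _

theorem iSup_abs_inner_div_l1Norm (w : EuclideanSpace ℝ ι) :
    ⨆ h : {h : EuclideanSpace ℝ ι // h ≠ 0}, |⟪w, h.1⟫| / l1Norm h.1 = linftyNorm w := by
  classical
  have hle (h : EuclideanSpace ℝ ι) : |⟪w, h⟫| / l1Norm h ≤ linftyNorm w :=
    div_le_of_le_mul₀ (l1Norm_nonneg h) (linftyNorm_nonneg w)
      (abs_inner_le_linftyNorm_mul_l1Norm w h)
  have hbdd : BddAbove (Set.range fun h : {h : EuclideanSpace ℝ ι // h ≠ 0} =>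
      |⟪w, h.1⟫| / l1Norm h.1) := ⟨_, Set.forall_mem_range.2 fun h => hle h.1⟩
  refine le_antisymm (Real.iSup_le (fun h => hle h.1) (linftyNorm_nonneg w)) ?_
  refine Real.iSup_le (fun i => ?_)
    (Real.iSup_nonneg fun h => div_nonneg (abs_nonneg _) (l1Norm_nonneg _))
  have hsingle : EuclideanSpace.single i (1 : ℝ) ≠ 0 := by simp
  have := le_ciSup hbdd ⟨_, hsingle⟩
  simpa [l1Norm_single, EuclideanSpace.inner_single_right] using this

theorem l1LinftyOpNorm_smulRight_innerSL (c : ℝ) (w : EuclideanSpace ℝ ι) :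
    l1LinftyOpNorm ((c • innerSL ℝ w).smulRight w) = linftyNorm w * linftyNorm (c • w) := by
  have hratio (h : EuclideanSpace ℝ ι) :
      linftyNorm ((c • innerSL ℝ w).smulRight w h) / l1Norm h
        = |c| * linftyNorm w * (|⟪w, h⟫| / l1Norm h) := by
    rw [ContinuousLinearMap.smulRight_apply, linftyNorm_smul, smul_apply,
      innerSL_apply_apply, smul_eq_mul, abs_mul]
    ring
  simp only [l1LinftyOpNorm, hratio]
  rw [← Real.mul_iSup_of_nonneg (mul_nonneg (abs_nonneg c) (linftyNorm_nonneg w)),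
    iSup_abs_inner_div_l1Norm, linftyNorm_smul]
  ring

end L1LinftyNorms

theorem logistic_kernel_generalized_smooth_general
    (n : ℕ)
    (w : EuclideanSpace ℝ (Fin n)) (b C : ℝ)
    (f₁ : EuclideanSpace ℝ (Fin n) → ℝ)
    (hf₁ : ∀ x, f₁ x = C * Real.exp (⟪w, x⟫ + b))
    (g : EuclideanSpace ℝ (Fin n) → EuclideanSpace ℝ (Fin n))
    (H : EuclideanSpace ℝ (Fin n) → EuclideanSpace ℝ (Fin n) →L[ℝ] EuclideanSpace ℝ (Fin n))
    (hg : ∀ x, HasGradientAt f₁ (g x) x)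
    (hH : ∀ x, HasFDerivAt g (H x) x)
    (x : EuclideanSpace ℝ (Fin n)) :
    ‖H x‖ = ‖w‖ * ‖g x‖ ∧
    (⨆ h : {h : EuclideanSpace ℝ (Fin n) // h ≠ 0},
        (⨆ i, |H x h.1 i|) / ∑ i, |h.1 i|) = (⨆ i, |w i|) * (⨆ i, |g x i|) := by
  obtain rfl : f₁ = fun y => C * Real.exp (⟪w, y⟫ + b) := funext hf₁
  have hg_eq : g = fun y => (C * Real.exp (⟪w, y⟫ + b)) • w :=
    funext fun y => (hg y).unique (hasGradientAt_const_mul_exp_inner_add w b C y)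
  have hH_eq : H x = ((C * Real.exp (⟪w, x⟫ + b)) • innerSL ℝ w).smulRight w := by
    subst hg_eq
    exact (hH x).unique ((hasFDerivAt_const_mul_exp_inner_add w b C x).smul_const w)
  rw [hH_eq, hg_eq]
  refine ⟨?_, l1LinftyOpNorm_smulRight_innerSL _ w⟩
  rw [ContinuousLinearMap.norm_smulRight_apply, norm_smul, norm_smul, innerSL_apply_norm]
  ring

/-- For `f₁(x) := C·exp(wᵀx + b)` on `ℝⁿ` with gradient `g` and Hessian `H`:
(i) the spectral norm of the Hessian satisfies `‖∇²f₁(x)‖₂ = ‖w‖₂·‖∇f₁(x)‖₂`, so `f₁` is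
`ℓ̂`-smooth in the `ℓ₂` sense with `ℓ̂(α) = ‖w‖₂·α`;
(ii) the `ℓ₁→ℓ∞` operator norm satisfies
`sup_{h ≠ 0} ‖∇²f₁(x)h‖_∞/‖h‖₁ = ‖w‖_∞·‖∇f₁(x)‖_∞`, so `f₁` is `ℓ̃*`-smooth w.r.t. `‖·‖₁`
with `ℓ̃(α) = ‖w‖_∞·α`. -/
theorem logistic_kernel_generalized_smooth
    (n : ℕ) (hn : 0 < n)
    (w : EuclideanSpace ℝ (Fin n)) (b C : ℝ) (hC : C ≠ 0)
    (f₁ : EuclideanSpace ℝ (Fin n) → ℝ)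
    (hf₁ : ∀ x, f₁ x = C * Real.exp (⟪w, x⟫ + b))
    (g : EuclideanSpace ℝ (Fin n) → EuclideanSpace ℝ (Fin n))
    (H : EuclideanSpace ℝ (Fin n) → EuclideanSpace ℝ (Fin n) →L[ℝ] EuclideanSpace ℝ (Fin n))
    (hg : ∀ x, HasGradientAt f₁ (g x) x)
    (hH : ∀ x, HasFDerivAt g (H x) x)
    (x : EuclideanSpace ℝ (Fin n)) :
    ‖H x‖ = ‖w‖ * ‖g x‖ ∧
    (⨆ h : {h : EuclideanSpace ℝ (Fin n) // h ≠ 0},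
        (⨆ i, |H x h.1 i|) / ∑ i, |h.1 i|) = (⨆ i, |w i|) * (⨆ i, |g x i|) :=
  logistic_kernel_generalized_smooth_general n w b C f₁ hf₁ g H hg hH x
end

section
/- Let w ∈ ℝⁿ, C ∈ ℝ with C ≠ 0, and f₂(x) := C·log(1 + exp(−wᵀx)) for x ∈ ℝⁿ (the logistic regression loss). Then for every x ∈ ℝⁿ: (i) ‖∇²f₂(x)‖₂ ≤ ‖w‖₂·‖∇f₂(x)‖₂, so f₂ is ℓ̂-smooth in the ℓ₂ sense with link function ℓ̂(α) = ‖w‖₂·α; (ii) sup_{h ≠ 0} ‖∇²f₂(x)h‖_∞/‖h‖₁ ≤ ‖w‖_∞·‖∇f₂(x)‖_∞, so f₂ is ℓ̃*-smooth with respect to ‖·‖₁ with link function ℓ̃(α) = ‖w‖_∞·α; and moreover (iii) ‖∇²f₂(x)‖₂ ≤ |C|·‖w‖₂²/4. -/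
open RealInnerProductSpace

/-!
The loss is a ridge function `x ↦ φ ⟪w, x⟫` with `φ t = C log (1 + e⁻ᵗ)`, so its gradient is
`φ' ⟪w, x⟫ • w` and its Hessian is the rank-one map `φ'' ⟪w, x⟫ • w wᵀ`. With `σ` the sigmoid,
`φ' = C (σ - 1)` and `φ'' = C σ (1 - σ)`; since `0 < σ < 1` we get `|φ''| ≤ |φ'|` and
`|φ''| ≤ |C| / 4`. The norms of `w wᵀ` are `‖w‖₂²` as an operator on `ℓ₂`, and at most `‖w‖_∞²`
as an operator from `ℓ₁` to `ℓ_∞` (Hölder), while the gradient has norm `|φ'| ‖w‖` in each norm.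
-/

section RidgeFunction

variable {E : Type*} [NormedAddCommGroup E] [InnerProductSpace ℝ E]

theorem HasDerivAt.hasGradientAt_comp_inner [CompleteSpace E] {φ : ℝ → ℝ} {d : ℝ} {w x : E}
    (h : HasDerivAt φ d ⟪w, x⟫) : HasGradientAt (fun y => φ ⟪w, y⟫) (d • w) x := by
  rw [hasGradientAt_iff_hasFDerivAt]
  refine (h.comp_hasFDerivAt x (innerSL ℝ w).hasFDerivAt).congr_fderiv ?_
  ext v
  simp

theorem HasDerivAt.hasFDerivAt_smul_comp_inner {ψ : ℝ → ℝ} {d : ℝ} {w x : E}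
    (h : HasDerivAt ψ d ⟪w, x⟫) :
    HasFDerivAt (fun y => ψ ⟪w, y⟫ • w) ((d • innerSL ℝ w).smulRight w) x :=
  (h.comp_hasFDerivAt x (innerSL ℝ w).hasFDerivAt).smul_const w

theorem norm_smulRight_smul_innerSL (a : ℝ) (w : E) :
    ‖(a • innerSL ℝ w).smulRight w‖ = |a| * ‖w‖ ^ 2 := by
  rw [ContinuousLinearMap.norm_smulRight_apply, norm_smul, innerSL_apply_norm,
    Real.norm_eq_abs, sq, mul_assoc]

end RidgeFunction

section SupNorm

variable {ι : Type*}

theorem abs_le_iSup_abs [Finite ι] (v : EuclideanSpace ℝ ι) (i : ι) : |v i| ≤ ⨆ j, |v j| :=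
  le_ciSup (f := fun j => |v j|) (Set.finite_range _).bddAbove i

theorem iSup_abs_nonneg (v : EuclideanSpace ℝ ι) : 0 ≤ ⨆ i, |v i| :=
  Real.iSup_nonneg fun i => abs_nonneg (v i)

theorem iSup_abs_smul (c : ℝ) (v : EuclideanSpace ℝ ι) :
    ⨆ i, |(c • v) i| = |c| * ⨆ i, |v i| := by
  simp only [PiLp.smul_apply, smul_eq_mul, abs_mul]
  exact (Real.mul_iSup_of_nonneg (abs_nonneg c) _).symm

theorem abs_inner_le_iSup_abs_mul_sum_abs [Fintype ι] (w h : EuclideanSpace ℝ ι) :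
    |⟪w, h⟫| ≤ (⨆ i, |w i|) * ∑ i, |h i| := by
  rw [PiLp.inner_apply, Finset.mul_sum]
  refine (Finset.abs_sum_le_sum_abs _ _).trans (Finset.sum_le_sum fun i _ => ?_)
  rw [RCLike.inner_apply, conj_trivial, abs_mul, mul_comm]
  exact mul_le_mul_of_nonneg_right (abs_le_iSup_abs w i) (abs_nonneg _)

theorem iSup_iSup_abs_smulRight_apply_div_le [Fintype ι] (a : ℝ) (w : EuclideanSpace ℝ ι) :
    (⨆ h : {h : EuclideanSpace ℝ ι // h ≠ 0},
        (⨆ i, |(a • innerSL ℝ w).smulRight w h.1 i|) / ∑ i, |h.1 i|) ≤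
      |a| * (⨆ i, |w i|) ^ 2 := by
  have hW := iSup_abs_nonneg w
  refine Real.iSup_le (fun ⟨h, _⟩ => ?_) (by positivity)
  have hS : 0 ≤ ∑ i, |h i| := Finset.sum_nonneg fun i _ => abs_nonneg (h i)
  refine div_le_of_le_mul₀ hS (by positivity) (Real.iSup_le (fun i => ?_) (by positivity))
  simp only [ContinuousLinearMap.smulRight_apply, smul_apply,
    coe_innerSL_apply, PiLp.smul_apply, smul_eq_mul, abs_mul]
  calc |a| * |⟪w, h⟫| * |w i|
      ≤ |a| * ((⨆ i, |w i|) * ∑ i, |h i|) * (⨆ i, |w i|) := by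
        gcongr
        exacts [abs_inner_le_iSup_abs_mul_sum_abs w h, abs_le_iSup_abs w i]
    _ = |a| * (⨆ i, |w i|) ^ 2 * ∑ i, |h i| := by ring

end SupNorm

section Logistic

open Real

theorem hasDerivAt_log_one_add_exp_neg (t : ℝ) :
    HasDerivAt (fun t => log (1 + exp (-t))) (sigmoid t - 1) t := by
  convert ((hasDerivAt_neg' t).exp.const_add 1).log (by positivity) using 1
  rw [sigmoid_def]
  field_simp
  ring

theorem sigmoid_mul_one_sub_nonneg (t : ℝ) : 0 ≤ sigmoid t * (1 - sigmoid t) :=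
  mul_nonneg (sigmoid_nonneg t) (sub_nonneg.2 (sigmoid_le_one t))

theorem sigmoid_mul_one_sub_le_one_sub (t : ℝ) :
    sigmoid t * (1 - sigmoid t) ≤ 1 - sigmoid t :=
  mul_le_of_le_one_left (sub_nonneg.2 (sigmoid_le_one t)) (sigmoid_le_one t)

theorem sigmoid_mul_one_sub_le_quarter (t : ℝ) : sigmoid t * (1 - sigmoid t) ≤ 1 / 4 := by
  nlinarith [sq_nonneg (2 * sigmoid t - 1)]

theorem abs_mul_sigmoid_mul_one_sub_le (C t : ℝ) :
    |C * (sigmoid t * (1 - sigmoid t))| ≤ |C * (sigmoid t - 1)| := by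
  rw [abs_mul C, abs_mul C, abs_of_nonneg (sigmoid_mul_one_sub_nonneg t), abs_sub_comm,
    abs_of_nonneg (sub_nonneg.2 (sigmoid_le_one t))]
  exact mul_le_mul_of_nonneg_left (sigmoid_mul_one_sub_le_one_sub t) (abs_nonneg C)

theorem abs_mul_sigmoid_mul_one_sub_le_quarter (C t : ℝ) :
    |C * (sigmoid t * (1 - sigmoid t))| ≤ |C| / 4 := by
  rw [abs_mul, abs_of_nonneg (sigmoid_mul_one_sub_nonneg t), div_eq_mul_one_div]
  exact mul_le_mul_of_nonneg_left (sigmoid_mul_one_sub_le_quarter t) (abs_nonneg C)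

end Logistic

theorem logistic_regression_generalized_smooth_general
    (n : ℕ)
    (w : EuclideanSpace ℝ (Fin n)) (C : ℝ)
    (f₂ : EuclideanSpace ℝ (Fin n) → ℝ)
    (hf₂ : ∀ x, f₂ x = C * Real.log (1 + Real.exp (-⟪w, x⟫)))
    (g : EuclideanSpace ℝ (Fin n) → EuclideanSpace ℝ (Fin n))
    (H : EuclideanSpace ℝ (Fin n) → EuclideanSpace ℝ (Fin n) →L[ℝ] EuclideanSpace ℝ (Fin n))
    (hg : ∀ x, HasGradientAt f₂ (g x) x)
    (hH : ∀ x, HasFDerivAt g (H x) x)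
    (x : EuclideanSpace ℝ (Fin n)) :
    ‖H x‖ ≤ ‖w‖ * ‖g x‖ ∧
    (⨆ h : {h : EuclideanSpace ℝ (Fin n) // h ≠ 0},
        (⨆ i, |H x h.1 i|) / ∑ i, |h.1 i|) ≤ (⨆ i, |w i|) * (⨆ i, |g x i|) ∧
    ‖H x‖ ≤ |C| * ‖w‖ ^ 2 / 4 := by
  obtain rfl : f₂ = _ := funext hf₂
  have hg_eq : g = fun y => (C * (Real.sigmoid ⟪w, y⟫ - 1)) • w := funext fun y =>
    (hg y).unique ((hasDerivAt_log_one_add_exp_neg _).const_mul C).hasGradientAt_comp_inner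
  set σ := Real.sigmoid ⟪w, x⟫
  have hH_eq : H x = ((C * (σ * (1 - σ))) • innerSL ℝ w).smulRight w := (hH x).unique <| hg_eq ▸
    (((Real.hasDerivAt_sigmoid _).sub_const 1).const_mul C).hasFDerivAt_smul_comp_inner
  have hgx : g x = (C * (σ - 1)) • w := by rw [hg_eq]
  have hcurv : |C * (σ * (1 - σ))| ≤ |C * (σ - 1)| := abs_mul_sigmoid_mul_one_sub_le C _
  refine ⟨?_, ?_, ?_⟩
  · rw [hH_eq, hgx, norm_smulRight_smul_innerSL, norm_smul, Real.norm_eq_abs]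
    calc |C * (σ * (1 - σ))| * ‖w‖ ^ 2
        ≤ |C * (σ - 1)| * ‖w‖ ^ 2 := by gcongr
      _ = ‖w‖ * (|C * (σ - 1)| * ‖w‖) := by ring
  · rw [hH_eq, hgx, iSup_abs_smul]
    calc _
        ≤ |C * (σ * (1 - σ))| * (⨆ i, |w i|) ^ 2 := iSup_iSup_abs_smulRight_apply_div_le _ _
      _ ≤ |C * (σ - 1)| * (⨆ i, |w i|) ^ 2 := by gcongr
      _ = (⨆ i, |w i|) * (|C * (σ - 1)| * ⨆ i, |w i|) := by ring
  · rw [hH_eq, norm_smulRight_smul_innerSL]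
    calc |C * (σ * (1 - σ))| * ‖w‖ ^ 2
        ≤ |C| / 4 * ‖w‖ ^ 2 := by gcongr; exact abs_mul_sigmoid_mul_one_sub_le_quarter C _
      _ = |C| * ‖w‖ ^ 2 / 4 := by ring

/-- For the logistic regression loss `f₂(x) := C·log(1 + exp(−wᵀx))` on `ℝⁿ`
with gradient `g` and Hessian `H`:
(i) `‖∇²f₂(x)‖₂ ≤ ‖w‖₂·‖∇f₂(x)‖₂`, so `f₂` is `ℓ̂`-smooth in the `ℓ₂` sense with
`ℓ̂(α) = ‖w‖₂·α`;
(ii) `sup_{h ≠ 0} ‖∇²f₂(x)h‖_∞/‖h‖₁ ≤ ‖w‖_∞·‖∇f₂(x)‖_∞`, so `f₂` is `ℓ̃*`-smooth w.r.t.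
`‖·‖₁` with `ℓ̃(α) = ‖w‖_∞·α`;
(iii) `‖∇²f₂(x)‖₂ ≤ |C|·‖w‖₂²/4`. -/
theorem logistic_regression_generalized_smooth
    (n : ℕ) (hn : 0 < n)
    (w : EuclideanSpace ℝ (Fin n)) (C : ℝ) (hC : C ≠ 0)
    (f₂ : EuclideanSpace ℝ (Fin n) → ℝ)
    (hf₂ : ∀ x, f₂ x = C * Real.log (1 + Real.exp (-⟪w, x⟫)))
    (g : EuclideanSpace ℝ (Fin n) → EuclideanSpace ℝ (Fin n))
    (H : EuclideanSpace ℝ (Fin n) → EuclideanSpace ℝ (Fin n) →L[ℝ] EuclideanSpace ℝ (Fin n))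
    (hg : ∀ x, HasGradientAt f₂ (g x) x)
    (hH : ∀ x, HasFDerivAt g (H x) x)
    (x : EuclideanSpace ℝ (Fin n)) :
    ‖H x‖ ≤ ‖w‖ * ‖g x‖ ∧
    (⨆ h : {h : EuclideanSpace ℝ (Fin n) // h ≠ 0},
        (⨆ i, |H x h.1 i|) / ∑ i, |h.1 i|) ≤ (⨆ i, |w i|) * (⨆ i, |g x i|) ∧
    ‖H x‖ ≤ |C| * ‖w‖ ^ 2 / 4 :=
  logistic_regression_generalized_smooth_general n w C f₂ hf₂ g H hg hH x
end
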